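/- Let A, W be m×m real symmetric positive definite matrices, b ∈ ℝ^m, w* = A⁻¹b, γ ∈ (0,1), and let a finite sketch distribution be given by matrices S_1, …, S_q (each with Sᵀ_i A W⁻¹ A S_i invertible) and probabilities p_1, …, p_q ≥ 0 summing to 1. For an index sequence ω = (ω_0,…,ω_t) ∈ {1,…,q}^{t+1}, define iterates w^{k+1}(ω) = w^k(ω) − γ ∇_W f_{S_{ω_k}}(w^k(ω)) from a fixed w^0 ∈ ℝ^m, and let w̄^t(ω) = (1/(t+1)) Σ_{k=0}^{t} w^k(ω) be the average iterate. Then, with E[·] denoting the weighted sum over all ω with weight Π_k p_{ω_k}, f(w) = Σ_i p_i f_{S_i}(w), and E[H_S] = Σ_i p_i H_{S_i}: E[f(w̄^t)] ≤ (1/(t+1)) · ‖w^0 − w*‖²_W / (2 γ (1 − γ)), and λ_min(E[H_S]) · E[‖A w̄^t − b‖²] ≤ (1/(t+1)) · ‖w^0 − w*‖²_W / (γ (1 − γ)). -/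

import Mathlib

open Matrix

/-- `H_S = S (Sᵀ A W⁻¹ A S)⁻¹ Sᵀ`. -/
noncomputable def sketchH {m τ : ℕ} (A W : Matrix (Fin m) (Fin m) ℝ)
    (S : Matrix (Fin m) (Fin τ) ℝ) : Matrix (Fin m) (Fin m) ℝ :=
  S * (Sᵀ * A * W⁻¹ * A * S)⁻¹ * Sᵀ

/-- `f_S(w) = ½ (A w − b)ᵀ H_S (A w − b)`. -/
noncomputable def sketchF {m τ : ℕ} (A W : Matrix (Fin m) (Fin m) ℝ)
    (S : Matrix (Fin m) (Fin τ) ℝ) (b w : Fin m → ℝ) : ℝ :=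
  (1 / 2) * ((A *ᵥ w - b) ⬝ᵥ (sketchH A W S *ᵥ (A *ᵥ w - b)))

/-- `∇_W f_S(w) = W⁻¹ A H_S (A w − b)`. -/
noncomputable def sketchGrad {m τ : ℕ} (A W : Matrix (Fin m) (Fin m) ℝ)
    (S : Matrix (Fin m) (Fin τ) ℝ) (b w : Fin m → ℝ) : Fin m → ℝ :=
  W⁻¹ *ᵥ (A *ᵥ (sketchH A W S *ᵥ (A *ᵥ w - b)))

/-- `uᵀ W u`, the squared `W`-norm. -/
def normSqW {m : ℕ} (W : Matrix (Fin m) (Fin m) ℝ) (u : Fin m → ℝ) : ℝ :=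
  u ⬝ᵥ (W *ᵥ u)

/-- The SGD/sketch-and-project iterates with step size `γ` driven by a finite index
sequence `σ : Fin t → Fin q`: `w^{k+1} = w^k − γ ∇_W f_{S_{σ_k}}(w^k)`. -/
noncomputable def sgdIter {m q : ℕ} (A W : Matrix (Fin m) (Fin m) ℝ) (b w0 : Fin m → ℝ)
    (τ : Fin q → ℕ) (S : (i : Fin q) → Matrix (Fin m) (Fin (τ i)) ℝ) (γ : ℝ) :
    (t : ℕ) → (Fin t → Fin q) → (Fin m → ℝ)
  | 0, _ => w0
  | t + 1, σ =>
      sgdIter A W b w0 τ S γ t (fun k => σ k.castSucc)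
        - γ • sketchGrad A W (S (σ (Fin.last t))) b
            (sgdIter A W b w0 τ S γ t (fun k => σ k.castSucc))


/-! ### Auxiliary lemmas -/

section AuxMatrix
variable {m τ : ℕ} {A W : Matrix (Fin m) (Fin m) ℝ} {S : Matrix (Fin m) (Fin τ) ℝ}

private lemma transpose_eq_self_of_posDef (hA : A.PosDef) : Aᵀ = A := by
  rw [← conjTranspose_eq_transpose_of_trivial]; exact hA.1.eq

private lemma M_posDef (hA : A.PosDef) (hW : W.PosDef)
    (hS : IsUnit (Sᵀ * A * W⁻¹ * A * S)) : (Sᵀ * A * W⁻¹ * A * S).PosDef := by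
  have hpsd : (Sᵀ * A * W⁻¹ * A * S).PosSemidef := by
    have h1 : Sᵀ * A * W⁻¹ * A * S = (A * S)ᴴ * W⁻¹ * (A * S) := by
      rw [conjTranspose_eq_transpose_of_trivial, transpose_mul,
        transpose_eq_self_of_posDef hA]
      simp only [Matrix.mul_assoc]
    rw [h1]
    exact hW.inv.posSemidef.conjTranspose_mul_mul_same (A * S)
  refine PosDef.of_dotProduct_mulVec_pos hpsd.1 fun x hx => ?_
  rcases lt_or_eq_of_le (hpsd.dotProduct_mulVec_nonneg x) with h | h
  · simpa using h
  · exfalso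
    have h0 : (Sᵀ * A * W⁻¹ * A * S) *ᵥ x = 0 := by
      rw [← hpsd.dotProduct_mulVec_zero_iff]
      simpa using h.symm
    have hx0 : x = 0 := by
      have h2 := congrArg (fun v => (Sᵀ * A * W⁻¹ * A * S)⁻¹ *ᵥ v) h0
      simpa [Matrix.mulVec_mulVec, Matrix.nonsing_inv_mul _
        ((Matrix.isUnit_iff_isUnit_det _).mp hS)] using h2
    exact hx hx0

lemma sketchH_posSemidef (hA : A.PosDef) (hW : W.PosDef)
    (hS : IsUnit (Sᵀ * A * W⁻¹ * A * S)) : (sketchH A W S).PosSemidef := by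
  have h1 : sketchH A W S = S * (Sᵀ * A * W⁻¹ * A * S)⁻¹ * Sᴴ := by
    rw [sketchH, conjTranspose_eq_transpose_of_trivial]
  rw [h1]
  exact (M_posDef hA hW hS).inv.posSemidef.mul_mul_conjTranspose_same S

lemma sketchH_symm (hA : A.PosDef) (hW : W.PosDef)
    (hS : IsUnit (Sᵀ * A * W⁻¹ * A * S)) : (sketchH A W S)ᵀ = sketchH A W S := by
  rw [← conjTranspose_eq_transpose_of_trivial]
  exact (sketchH_posSemidef hA hW hS).1.eq

lemma sketchH_idem (hS : IsUnit (Sᵀ * A * W⁻¹ * A * S)) :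
    sketchH A W S * (A * W⁻¹ * A) * sketchH A W S = sketchH A W S := by
  have hdet := (Matrix.isUnit_iff_isUnit_det _).mp hS
  calc sketchH A W S * (A * W⁻¹ * A) * sketchH A W S
      = S * (Sᵀ * A * W⁻¹ * A * S)⁻¹ * ((Sᵀ * A * W⁻¹ * A * S) *
          ((Sᵀ * A * W⁻¹ * A * S)⁻¹ * Sᵀ)) := by
        simp only [sketchH, Matrix.mul_assoc]
    _ = sketchH A W S := by
        rw [← Matrix.mul_assoc (Sᵀ * A * W⁻¹ * A * S), Matrix.mul_nonsing_inv _ hdet,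
          Matrix.one_mul, sketchH, Matrix.mul_assoc]

lemma convexOn_psd_quad {n : ℕ} {H : Matrix (Fin n) (Fin n) ℝ} (hH : H.PosSemidef) :
    ConvexOn ℝ Set.univ (fun x : Fin n → ℝ => x ⬝ᵥ (H *ᵥ x)) := by
  refine ⟨convex_univ, fun x _ y _ a c ha hc hac => ?_⟩
  have h0 : 0 ≤ (x - y) ⬝ᵥ (H *ᵥ (x - y)) := by simpa using hH.dotProduct_mulVec_nonneg (x - y)
  simp only [smul_eq_mul] at *
  have hsub : (x - y) ⬝ᵥ (H *ᵥ (x - y)) =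
      x ⬝ᵥ (H *ᵥ x) - x ⬝ᵥ (H *ᵥ y) - y ⬝ᵥ (H *ᵥ x) + y ⬝ᵥ (H *ᵥ y) := by
    simp [Matrix.mulVec_sub, dotProduct_sub, sub_dotProduct]; ring
  have hmain : (a • x + c • y) ⬝ᵥ (H *ᵥ (a • x + c • y)) =
      a^2 * (x ⬝ᵥ (H *ᵥ x)) + a*c*(x ⬝ᵥ (H *ᵥ y)) + a*c*(y ⬝ᵥ (H *ᵥ x))
        + c^2 * (y ⬝ᵥ (H *ᵥ y)) := by
    simp [Matrix.mulVec_add, Matrix.mulVec_smul, dotProduct_add, add_dotProduct,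
      dotProduct_smul, smul_dotProduct, smul_eq_mul]
    ring
  rw [hsub] at h0
  rw [hmain]
  have hc1 : c = 1 - a := by linarith
  subst hc1
  nlinarith [mul_nonneg ha hc, h0, mul_nonneg (mul_nonneg ha hc) h0]

lemma rayleigh_min {n : ℕ} {B : Matrix (Fin n) (Fin n) ℝ} (hB : B.IsHermitian) (x : Fin n → ℝ) :
    (⨅ j, hB.eigenvalues j) * (x ⬝ᵥ x) ≤ x ⬝ᵥ (B *ᵥ x) := by
  rcases Nat.eq_zero_or_pos n with h | h
  · subst h
    simp [iInf_of_empty, Real.sInf_empty, dotProduct]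
  · have hne : Nonempty (Fin n) := ⟨⟨0, h⟩⟩
    set U : Matrix (Fin n) (Fin n) ℝ := (hB.eigenvectorUnitary : Matrix (Fin n) (Fin n) ℝ) with hU
    have hstar : star U = Uᵀ := by
      rw [Matrix.star_eq_conjTranspose, conjTranspose_eq_transpose_of_trivial]
    have hUU : U * Uᵀ = 1 := by
      rw [← hstar]; exact (Matrix.mem_unitaryGroup_iff).mp hB.eigenvectorUnitary.2
    set y : Fin n → ℝ := x ᵥ* U with hy
    have hxx : x ⬝ᵥ x = y ⬝ᵥ y := by
      conv_rhs => rw [hy]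
      rw [show x ᵥ* U = Uᵀ *ᵥ x from (Matrix.mulVec_transpose U x).symm,
        Matrix.dotProduct_mulVec]
      rw [Matrix.vecMul_transpose, Matrix.mulVec_mulVec, hUU, Matrix.one_mulVec]
    have hspec : x ⬝ᵥ (B *ᵥ x) = ∑ j, hB.eigenvalues j * (y j * y j) := by
      conv_lhs => rw [hB.spectral_theorem]
      rw [Unitary.conjStarAlgAut_apply, ← hU, hstar, ← Matrix.mulVec_mulVec, ← Matrix.mulVec_mulVec,
        Matrix.dotProduct_mulVec x U, Matrix.mulVec_transpose, ← hy]
      simp only [dotProduct, Matrix.mulVec_diagonal]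
      refine Finset.sum_congr rfl fun j _ => ?_
      simp [RCLike.ofReal]
      ring
    rw [hxx, hspec, dotProduct, Finset.mul_sum]
    refine Finset.sum_le_sum fun j _ => ?_
    have h1 : (⨅ k, hB.eigenvalues k) ≤ hB.eigenvalues j :=
      ciInf_le (Finite.bddBelow_range _) j
    nlinarith [mul_self_nonneg (y j)]

private lemma dot_conj (Wm P : Matrix (Fin m) (Fin m) ℝ) (e : Fin m → ℝ) :
    (P *ᵥ e) ⬝ᵥ (Wm *ᵥ (P *ᵥ e)) = e ⬝ᵥ ((Pᵀ * Wm * P) *ᵥ e) := by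
  rw [← Matrix.mulVec_mulVec, ← Matrix.mulVec_mulVec,
    Matrix.dotProduct_mulVec e, Matrix.vecMul_transpose, Matrix.mulVec_mulVec]

lemma descent_identity (hA : A.PosDef) (hW : W.PosDef)
    (hS : IsUnit (Sᵀ * A * W⁻¹ * A * S)) {b wstar : Fin m → ℝ}
    (hb : A *ᵥ wstar = b) (γ : ℝ) (w : Fin m → ℝ) :
    normSqW W (w - γ • sketchGrad A W S b w - wstar)
      = normSqW W (w - wstar) - (2*γ - γ^2) * (2 * sketchF A W S b w) := by
  have hWdet : IsUnit W.det := (Matrix.isUnit_iff_isUnit_det W).mp hW.isUnit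
  have hWiW : W⁻¹ * W = 1 := Matrix.nonsing_inv_mul W hWdet
  have hWWi : W * W⁻¹ = 1 := Matrix.mul_nonsing_inv W hWdet
  have hWiT : (W⁻¹)ᵀ = W⁻¹ := transpose_eq_self_of_posDef hW.inv
  have hAT : Aᵀ = A := transpose_eq_self_of_posDef hA
  set H := sketchH A W S with hH
  have hHT : Hᵀ = H := sketchH_symm hA hW hS
  set K := A * (H * A) with hK
  have hKT : Kᵀ = K := by rw [hK, transpose_mul, transpose_mul, hAT, hHT, Matrix.mul_assoc]
  set G := W⁻¹ * K with hG
  set e := w - wstar with he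
  have hre : A *ᵥ w - b = A *ᵥ e := by rw [he, Matrix.mulVec_sub, hb]
  have hKWK : K * W⁻¹ * K = K := by
    have h2 := sketchH_idem (A := A) (W := W) hS
    calc K * W⁻¹ * K = A * (H * (A * W⁻¹ * A) * H * A) := by
          simp only [hK, Matrix.mul_assoc]
      _ = K := by rw [show H * (A * W⁻¹ * A) * H * A = (H * (A * W⁻¹ * A) * H) * A from by
            simp only [Matrix.mul_assoc], h2, hK]
  have hgrad : sketchGrad A W S b w = G *ᵥ e := by
    rw [sketchGrad, hre, ← hH]
    simp only [Matrix.mulVec_mulVec, hG, hK, Matrix.mul_assoc]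
  have hiter : w - γ • sketchGrad A W S b w - wstar = (1 - γ • G) *ᵥ e := by
    rw [hgrad, Matrix.sub_mulVec, Matrix.one_mulVec, Matrix.smul_mulVec, he]
    abel
  have e2 : W * (γ • G) = γ • K := by
    rw [Matrix.mul_smul, hG, ← Matrix.mul_assoc, hWWi, Matrix.one_mul]
  have e3 : (γ • (K * W⁻¹)) * W = γ • K := by
    rw [Matrix.smul_mul, Matrix.mul_assoc, hWiW, Matrix.mul_one]
  have e5 : (γ • K) * (γ • G) = (γ^2) • K := by
    rw [Matrix.smul_mul, Matrix.mul_smul, hG, ← Matrix.mul_assoc, hKWK, smul_smul, pow_two]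
  have hmat : (1 - γ • G)ᵀ * W * (1 - γ • G) = W - (2*γ - γ^2) • K := by
    have hGT : (γ • G)ᵀ = γ • (K * W⁻¹) := by
      rw [transpose_smul, hG, transpose_mul, hWiT, hKT]
    rw [transpose_sub, transpose_one, hGT]
    calc (1 - γ • (K * W⁻¹)) * W * (1 - γ • G)
        = (W - γ • K) * (1 - γ • G) := by rw [Matrix.sub_mul, Matrix.one_mul, e3]
      _ = W - γ • K - (γ • K - γ^2 • K) := by
          rw [Matrix.mul_sub, Matrix.mul_one, Matrix.sub_mul, e2, e5]
      _ = W - (2*γ - γ^2) • K := by module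
  have hvm : e ᵥ* A = A *ᵥ e := by
    conv_lhs => rw [← hAT]
    rw [Matrix.vecMul_transpose]
  have hKdot : e ⬝ᵥ (K *ᵥ e) = (A *ᵥ e) ⬝ᵥ (H *ᵥ (A *ᵥ e)) := by
    rw [hK, ← Matrix.mulVec_mulVec, Matrix.dotProduct_mulVec e, hvm, Matrix.mulVec_mulVec]
  have hF : 2 * sketchF A W S b w = e ⬝ᵥ (K *ᵥ e) := by
    rw [sketchF, hre, ← hH, hKdot]; ring
  rw [hiter, normSqW, dot_conj, hmat, Matrix.sub_mulVec, dotProduct_sub,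
    Matrix.smul_mulVec, dotProduct_smul, smul_eq_mul, hF, normSqW, he]

lemma sketchF_nonneg {b : Fin m → ℝ} (hH : (sketchH A W S).PosSemidef) (w : Fin m → ℝ) :
    0 ≤ sketchF A W S b w := by
  rw [sketchF]
  have := hH.dotProduct_mulVec_nonneg (A *ᵥ w - b)
  simp only [star_trivial] at this
  linarith

lemma sketchF_avg {b : Fin m → ℝ} (hH : (sketchH A W S).PosSemidef) (t : ℕ)
    (v : Fin (t + 1) → Fin m → ℝ) :
    sketchF A W S b (((t : ℝ) + 1)⁻¹ • ∑ k, v k)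
      ≤ ((t : ℝ) + 1)⁻¹ * ∑ k, sketchF A W S b (v k) := by
  set c : ℝ := ((t : ℝ) + 1)⁻¹ with hc
  have htpos : (0 : ℝ) < (t : ℝ) + 1 := by positivity
  have hcpos : 0 < c := by positivity
  have hcsum : ∑ _k : Fin (t + 1), c = 1 := by
    rw [Finset.sum_const, Finset.card_univ, Fintype.card_fin, nsmul_eq_mul, hc]
    push_cast
    field_simp
  have hres : A *ᵥ (c • ∑ k, v k) - b = ∑ k, c • (A *ᵥ v k - b) := by
    rw [Matrix.mulVec_smul]
    rw [show A *ᵥ (∑ k, v k) = ∑ k, A *ᵥ v k from map_sum A.mulVecLin v Finset.univ]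
    rw [Finset.smul_sum]
    have h6 : ∑ k : Fin (t + 1), c • (A *ᵥ v k - b)
        = (∑ k : Fin (t + 1), c • (A *ᵥ v k)) - (∑ _k : Fin (t + 1), c • b) := by
      rw [← Finset.sum_sub_distrib]
      exact Finset.sum_congr rfl fun k _ => smul_sub c _ _
    rw [h6, ← Finset.sum_smul, hcsum, one_smul]
  have hjen := (convexOn_psd_quad hH).map_sum_le (t := Finset.univ)
    (w := fun _ : Fin (t+1) => c) (p := fun k => A *ᵥ v k - b)
    (fun _ _ => le_of_lt hcpos) hcsum (fun _ _ => Set.mem_univ _)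
  simp only [sketchF]
  rw [hres]
  calc (1:ℝ)/2 * ((∑ k, c • (A *ᵥ v k - b)) ⬝ᵥ sketchH A W S *ᵥ (∑ k, c • (A *ᵥ v k - b)))
      ≤ (1:ℝ)/2 * ∑ k, c * ((A *ᵥ v k - b) ⬝ᵥ sketchH A W S *ᵥ (A *ᵥ v k - b)) := by
        simp only [smul_eq_mul] at hjen ⊢
        nlinarith [hjen]
    _ = c * ∑ k, 1/2 * ((A *ᵥ v k - b) ⬝ᵥ sketchH A W S *ᵥ (A *ᵥ v k - b)) := by
        rw [Finset.mul_sum, Finset.mul_sum]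
        exact Finset.sum_congr rfl fun k _ => by ring

end AuxMatrix

private lemma sum_mulVec' {m q : ℕ} (f : Fin q → Matrix (Fin m) (Fin m) ℝ) (v : Fin m → ℝ) :
    (∑ i, f i) *ᵥ v = ∑ i, f i *ᵥ v := by
  ext j
  simp only [Matrix.mulVec, dotProduct, Matrix.sum_apply, Finset.sum_mul]
  rw [Finset.sum_comm]
  simp [Matrix.mulVec, dotProduct, Finset.sum_apply]

private lemma dotProduct_sum' {m q : ℕ} (u : Fin m → ℝ) (w : Fin q → Fin m → ℝ) :
    u ⬝ᵥ (∑ i, w i) = ∑ i, u ⬝ᵥ w i := by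
  simp only [dotProduct, Finset.sum_apply, Finset.mul_sum]
  rw [Finset.sum_comm]

/-- Iterates driven by an infinite index sequence. -/
noncomputable def itSeq {m q : ℕ} (A W : Matrix (Fin m) (Fin m) ℝ) (b w0 : Fin m → ℝ)
    (τ : Fin q → ℕ) (S : (i : Fin q) → Matrix (Fin m) (Fin (τ i)) ℝ) (γ : ℝ)
    (σ : ℕ → Fin q) : ℕ → (Fin m → ℝ)
  | 0 => w0
  | k + 1 => itSeq A W b w0 τ S γ σ k
      - γ • sketchGrad A W (S (σ k)) b (itSeq A W b w0 τ S γ σ k)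

def extFun {q n : ℕ} (i0 : Fin q) (σ : Fin n → Fin q) : ℕ → Fin q :=
  fun j => if h : j < n then σ ⟨j, h⟩ else i0

section AuxIter
variable {m q : ℕ} {A W : Matrix (Fin m) (Fin m) ℝ} {b wstar w0 : Fin m → ℝ}
  {τ : Fin q → ℕ} {S : (i : Fin q) → Matrix (Fin m) (Fin (τ i)) ℝ} {γ : ℝ}
  {p : Fin q → ℝ}

lemma itSeq_congr {σ1 σ2 : ℕ → Fin q} : ∀ (k : ℕ), (∀ j < k, σ1 j = σ2 j) →
    itSeq A W b w0 τ S γ σ1 k = itSeq A W b w0 τ S γ σ2 k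
  | 0, _ => rfl
  | k + 1, h => by
    have ih := itSeq_congr k (fun j hj => h j (Nat.lt_succ_of_lt hj))
    simp only [itSeq, ih]
    rw [show σ1 k = σ2 k from h k (Nat.lt_succ_self k)]

lemma sgd_eq_itSeq : ∀ (t : ℕ) (σF : Fin t → Fin q) (σ : ℕ → Fin q),
    (∀ k : Fin t, σ k = σF k) →
    sgdIter A W b w0 τ S γ t σF = itSeq A W b w0 τ S γ σ t
  | 0, _, _, _ => rfl
  | t + 1, σF, σ, h => by
    have ih := sgd_eq_itSeq t (fun k => σF k.castSucc) σ
      (fun k => by have := h k.castSucc; simpa using this)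
    show sgdIter A W b w0 τ S γ t (fun k => σF k.castSucc)
        - γ • sketchGrad A W (S (σF (Fin.last t))) b
            (sgdIter A W b w0 τ S γ t (fun k => σF k.castSucc))
      = _
    rw [ih, show σF (Fin.last t) = σ t from by rw [h ⟨t, Nat.lt_succ_self t⟩]; rfl]
    rfl

lemma extFun_snoc_lt {n : ℕ} (i0 i : Fin q) (σ : Fin n → Fin q) {j : ℕ} (hj : j < n) :
    extFun i0 (Fin.snoc (α := fun _ => Fin q) σ i) j = extFun i0 σ j := by
  simp only [extFun, dif_pos hj, dif_pos (Nat.lt_succ_of_lt hj)]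
  rw [show (⟨j, Nat.lt_succ_of_lt hj⟩ : Fin (n+1)) = Fin.castSucc ⟨j, hj⟩ from rfl,
    Fin.snoc_castSucc]

lemma extFun_snoc_self {n : ℕ} (i0 i : Fin q) (σ : Fin n → Fin q) :
    extFun i0 (Fin.snoc (α := fun _ => Fin q) σ i) n = i := by
  simp only [extFun, dif_pos (Nat.lt_succ_self n)]
  rw [show (⟨n, Nat.lt_succ_self n⟩ : Fin (n+1)) = Fin.last n from rfl, Fin.snoc_last]

lemma sgd_invariant (hA : A.PosDef) (hW : W.PosDef)
    (hS : ∀ i, IsUnit ((S i)ᵀ * A * W⁻¹ * A * S i))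
    (hb : A *ᵥ wstar = b) (hp1 : ∑ i, p i = 1) (i0 : Fin q) :
    ∀ n : ℕ,
    ∑ σ : Fin n → Fin q, (∏ k, p (σ k)) *
      ((2*(2*γ - γ^2)) * (∑ k : Fin n, ∑ i, p i * sketchF A W (S i) b
          (itSeq A W b w0 τ S γ (extFun i0 σ) k))
        + normSqW W (itSeq A W b w0 τ S γ (extFun i0 σ) n - wstar))
      = normSqW W (w0 - wstar) := by
  intro n
  induction n with
  | zero =>
      rw [Fintype.sum_unique]
      simp [itSeq]
  | succ n ih =>
      rw [← (Fin.snocEquiv (fun _ => Fin q)).sum_comp, Fintype.sum_prod_type,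
        Finset.sum_comm]
      rw [← ih]
      refine Finset.sum_congr rfl fun σ _ => ?_
      set X := itSeq A W b w0 τ S γ (extFun i0 σ) n with hX
      have h3 : ∀ k : ℕ, k ≤ n → ∀ i : Fin q,
          itSeq A W b w0 τ S γ (extFun i0 (Fin.snoc (α := fun _ => Fin q) σ i)) k
            = itSeq A W b w0 τ S γ (extFun i0 σ) k := by
        intro k hk i
        exact itSeq_congr k fun j hj => extFun_snoc_lt i0 i σ (lt_of_lt_of_le hj hk)
      have h4 : ∀ i : Fin q,
          itSeq A W b w0 τ S γ (extFun i0 (Fin.snoc (α := fun _ => Fin q) σ i)) (n+1)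
          = X - γ • sketchGrad A W (S i) b X := by
        intro i
        show itSeq A W b w0 τ S γ (extFun i0 (Fin.snoc (α := fun _ => Fin q) σ i)) n
            - γ • sketchGrad A W
                (S (extFun i0 (Fin.snoc (α := fun _ => Fin q) σ i) n)) b
              (itSeq A W b w0 τ S γ (extFun i0 (Fin.snoc (α := fun _ => Fin q) σ i)) n) = _
        rw [h3 n le_rfl, extFun_snoc_self]
      have h1 : ∀ i : Fin q,
          (∏ k : Fin (n+1), p (Fin.snoc (α := fun _ => Fin q) σ i k))
          = (∏ k : Fin n, p (σ k)) * p i := by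
        intro i
        rw [Fin.prod_univ_castSucc]
        simp only [Fin.snoc_castSucc, Fin.snoc_last]
      have h5 : ∀ i : Fin q, (∑ k : Fin (n+1), ∑ j, p j * sketchF A W (S j) b
            (itSeq A W b w0 τ S γ (extFun i0 (Fin.snoc (α := fun _ => Fin q) σ i)) k))
          = (∑ k : Fin n, ∑ j, p j * sketchF A W (S j) b
              (itSeq A W b w0 τ S γ (extFun i0 σ) k))
            + ∑ j, p j * sketchF A W (S j) b X := by
        intro i
        rw [Fin.sum_univ_castSucc]
        congr 1
        · refine Finset.sum_congr rfl fun k _ => ?_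
          rw [show ((Fin.castSucc k : Fin (n+1)) : ℕ) = (k : ℕ) from rfl,
            h3 k (le_of_lt k.isLt)]
        · rw [show ((Fin.last n : Fin (n+1)) : ℕ) = n from rfl, h3 n le_rfl]
      calc ∑ i : Fin q, (∏ k : Fin (n+1), p (Fin.snoc (α := fun _ => Fin q) σ i k)) *
            ((2*(2*γ - γ^2)) * (∑ k : Fin (n+1), ∑ j, p j * sketchF A W (S j) b
                (itSeq A W b w0 τ S γ (extFun i0 (Fin.snoc (α := fun _ => Fin q) σ i)) k))
              + normSqW W
                  (itSeq A W b w0 τ S γ (extFun i0 (Fin.snoc (α := fun _ => Fin q) σ i)) (n+1)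
                    - wstar))
          = ∑ i : Fin q, ((p i * ((∏ k : Fin n, p (σ k)) *
              ((2*(2*γ - γ^2)) * ((∑ k : Fin n, ∑ j, p j * sketchF A W (S j) b
                  (itSeq A W b w0 τ S γ (extFun i0 σ) k))
                + ∑ j, p j * sketchF A W (S j) b X)
               + normSqW W (X - wstar))))
            - (∏ k : Fin n, p (σ k)) * (2*(2*γ - γ^2))
                * (p i * sketchF A W (S i) b X)) := by
            refine Finset.sum_congr rfl fun i _ => ?_
            rw [h1 i, h5 i, h4 i, descent_identity hA hW (hS i) hb γ X]
            ring
        _ = (∏ k : Fin n, p (σ k)) *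
            ((2*(2*γ - γ^2)) * (∑ k : Fin n, ∑ j, p j * sketchF A W (S j) b
                (itSeq A W b w0 τ S γ (extFun i0 σ) k))
              + normSqW W (X - wstar)) := by
            rw [Finset.sum_sub_distrib, ← Finset.sum_mul, hp1, ← Finset.mul_sum]
            ring

end AuxIter

/-- **Sublinear convergence of the average iterate (Theorem 5):** with `γ ∈ (0,1)`,
the average iterate `w̄ᵗ = (1/(t+1)) Σ_{k=0}^t w^k` satisfies
`E[f(w̄ᵗ)] ≤ (1/(t+1)) ‖w⁰ − w*‖²_W / (2γ(1−γ))` and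
`λ_min(E[H_S]) E[‖A w̄ᵗ − b‖²] ≤ (1/(t+1)) ‖w⁰ − w*‖²_W / (γ(1−γ))`.
(The hypothesis `hEH` records the — always valid — fact that `E[H_S]` is symmetric.) -/
theorem average_iterate_sublinear_convergence {m q : ℕ}
    (A W : Matrix (Fin m) (Fin m) ℝ) (hA : A.PosDef) (hW : W.PosDef)
    (b wstar : Fin m → ℝ) (hwstar : wstar = A⁻¹ *ᵥ b)
    (γ : ℝ) (hγ0 : 0 < γ) (hγ1 : γ < 1)
    (τ : Fin q → ℕ) (S : (i : Fin q) → Matrix (Fin m) (Fin (τ i)) ℝ)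
    (hS : ∀ i, IsUnit ((S i)ᵀ * A * W⁻¹ * A * S i))
    (p : Fin q → ℝ) (hp : ∀ i, 0 ≤ p i) (hp1 : ∑ i, p i = 1)
    (hEH : (∑ i, p i • sketchH A W (S i)).IsHermitian)
    (w0 : Fin m → ℝ) (t : ℕ) :
    let wbar : (Fin t → Fin q) → (Fin m → ℝ) := fun σ =>
      ((t : ℝ) + 1)⁻¹ • ∑ k : Fin (t + 1),
        sgdIter A W b w0 τ S γ k
          (fun j => σ (Fin.castLE (Nat.lt_succ_iff.mp k.isLt) j))
    (∑ σ : Fin t → Fin q, (∏ k, p (σ k)) * ∑ i, p i * sketchF A W (S i) b (wbar σ))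
        ≤ ((t : ℝ) + 1)⁻¹ * (normSqW W (w0 - wstar) / (2 * γ * (1 - γ))) ∧
    (⨅ j, hEH.eigenvalues j) *
        (∑ σ : Fin t → Fin q, (∏ k, p (σ k)) *
          ((A *ᵥ wbar σ - b) ⬝ᵥ (A *ᵥ wbar σ - b)))
      ≤ ((t : ℝ) + 1)⁻¹ * (normSqW W (w0 - wstar) / (γ * (1 - γ))) := by
  intro wbar
  classical
  have hq0 : q ≠ 0 := by
    rintro rfl
    simp at hp1
  have i0 : Fin q := ⟨0, Nat.pos_of_ne_zero hq0⟩
  have hAdet : IsUnit A.det := (Matrix.isUnit_iff_isUnit_det A).mp hA.isUnit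
  have hb : A *ᵥ wstar = b := by
    rw [hwstar, Matrix.mulVec_mulVec, Matrix.mul_nonsing_inv _ hAdet, Matrix.one_mulVec]
  set R := normSqW W (w0 - wstar) with hRdef
  have hRnn : 0 ≤ R := by
    have := hW.posSemidef.dotProduct_mulVec_nonneg (w0 - wstar)
    simpa [hRdef, normSqW] using this
  set c : ℝ := 2*(2*γ - γ^2) with hcdef
  have hcpos : 0 < c := by nlinarith
  have hγγ : 0 < 2*γ*(1-γ) := by nlinarith
  have hγc : 2*γ*(1-γ) ≤ c := by nlinarith
  have htpos : (0:ℝ) < (t:ℝ) + 1 := by positivity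
  have htinv : (0:ℝ) ≤ ((t:ℝ)+1)⁻¹ := by positivity
  have hprodnn : ∀ σ : Fin t → Fin q, 0 ≤ ∏ k, p (σ k) :=
    fun σ => Finset.prod_nonneg fun k _ => hp _
  have hiter : ∀ (σ : Fin t → Fin q) (k : Fin (t+1)),
      sgdIter A W b w0 τ S γ k (fun j => σ (Fin.castLE (Nat.lt_succ_iff.mp k.isLt) j))
        = itSeq A W b w0 τ S γ (extFun i0 σ) k := by
    intro σ k
    refine sgd_eq_itSeq (k:ℕ) _ _ (fun j => ?_)
    have hj : (j:ℕ) < t := lt_of_lt_of_le j.isLt (Nat.lt_succ_iff.mp k.isLt)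
    simp only [extFun, dif_pos hj]
    exact congrArg σ (Fin.ext rfl)
  have hwbar : ∀ σ : Fin t → Fin q, wbar σ
      = ((t:ℝ)+1)⁻¹ • ∑ k : Fin (t+1), itSeq A W b w0 τ S γ (extFun i0 σ) k := by
    intro σ
    show ((t:ℝ)+1)⁻¹ • ∑ k : Fin (t+1), sgdIter A W b w0 τ S γ k
        (fun j => σ (Fin.castLE (Nat.lt_succ_iff.mp k.isLt) j)) = _
    congr 1
    exact Finset.sum_congr rfl fun k _ => hiter σ k
  have hpoint : ∀ X : Fin m → ℝ,
      c * (∑ i, p i * sketchF A W (S i) b X) ≤ normSqW W (X - wstar) := by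
    intro X
    have h1 : ∀ i, c * sketchF A W (S i) b X ≤ normSqW W (X - wstar) := by
      intro i
      have hd := descent_identity hA hW (hS i) hb γ X
      have hnn : 0 ≤ normSqW W (X - γ • sketchGrad A W (S i) b X - wstar) := by
        have := hW.posSemidef.dotProduct_mulVec_nonneg (X - γ • sketchGrad A W (S i) b X - wstar)
        simpa [normSqW] using this
      rw [hd] at hnn
      rw [hcdef]
      nlinarith [hnn]
    calc c * ∑ i, p i * sketchF A W (S i) b X
        = ∑ i, p i * (c * sketchF A W (S i) b X) := by
          rw [Finset.mul_sum]
          exact Finset.sum_congr rfl fun i _ => by ring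
      _ ≤ ∑ i, p i * normSqW W (X - wstar) :=
          Finset.sum_le_sum fun i _ => mul_le_mul_of_nonneg_left (h1 i) (hp i)
      _ = normSqW W (X - wstar) := by rw [← Finset.sum_mul, hp1, one_mul]
  have key3 : ∑ σ : Fin t → Fin q, (∏ k, p (σ k)) *
      (∑ k : Fin (t+1), ∑ i, p i * sketchF A W (S i) b
          (itSeq A W b w0 τ S γ (extFun i0 σ) k))
      ≤ R / c := by
    rw [le_div_iff₀ hcpos]
    have hinv := sgd_invariant (w0 := w0) (γ := γ) hA hW hS hb hp1 i0 t
    calc (∑ σ : Fin t → Fin q, (∏ k, p (σ k)) *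
          (∑ k : Fin (t+1), ∑ i, p i * sketchF A W (S i) b
            (itSeq A W b w0 τ S γ (extFun i0 σ) k))) * c
        = ∑ σ : Fin t → Fin q, (∏ k, p (σ k)) *
            (c * ∑ k : Fin (t+1), ∑ i, p i * sketchF A W (S i) b
              (itSeq A W b w0 τ S γ (extFun i0 σ) k)) := by
          rw [Finset.sum_mul]
          exact Finset.sum_congr rfl fun σ _ => by ring
      _ ≤ ∑ σ : Fin t → Fin q, (∏ k, p (σ k)) *
            (c * (∑ k : Fin t, ∑ i, p i * sketchF A W (S i) b
                (itSeq A W b w0 τ S γ (extFun i0 σ) k))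
              + normSqW W (itSeq A W b w0 τ S γ (extFun i0 σ) t - wstar)) := by
          refine Finset.sum_le_sum fun σ _ => mul_le_mul_of_nonneg_left ?_ (hprodnn σ)
          rw [Fin.sum_univ_castSucc]
          simp only [Fin.coe_castSucc, Fin.val_last]
          rw [mul_add]
          exact add_le_add le_rfl (hpoint _)
      _ = R := hinv
  have hHpsd : ∀ i, (sketchH A W (S i)).PosSemidef := fun i => sketchH_posSemidef hA hW (hS i)
  have key2 : ∀ σ : Fin t → Fin q, (∑ i, p i * sketchF A W (S i) b (wbar σ))
      ≤ ((t:ℝ)+1)⁻¹ * ∑ k : Fin (t+1), ∑ i, p i * sketchF A W (S i) b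
          (itSeq A W b w0 τ S γ (extFun i0 σ) k) := by
    intro σ
    rw [hwbar σ]
    calc ∑ i, p i * sketchF A W (S i) b
          (((t:ℝ)+1)⁻¹ • ∑ k : Fin (t+1), itSeq A W b w0 τ S γ (extFun i0 σ) k)
        ≤ ∑ i, p i * (((t:ℝ)+1)⁻¹ * ∑ k : Fin (t+1), sketchF A W (S i) b
            (itSeq A W b w0 τ S γ (extFun i0 σ) k)) :=
          Finset.sum_le_sum fun i _ =>
            mul_le_mul_of_nonneg_left (sketchF_avg (hHpsd i) t _) (hp i)
      _ = ∑ i, ∑ k : Fin (t+1), ((t:ℝ)+1)⁻¹ * (p i * sketchF A W (S i) b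
            (itSeq A W b w0 τ S γ (extFun i0 σ) k)) := by
          refine Finset.sum_congr rfl fun i _ => ?_
          rw [Finset.mul_sum, Finset.mul_sum]
          exact Finset.sum_congr rfl fun k _ => by ring
      _ = ∑ k : Fin (t+1), ∑ i, ((t:ℝ)+1)⁻¹ * (p i * sketchF A W (S i) b
            (itSeq A W b w0 τ S γ (extFun i0 σ) k)) := Finset.sum_comm
      _ = ((t:ℝ)+1)⁻¹ * ∑ k : Fin (t+1), ∑ i, p i * sketchF A W (S i) b
            (itSeq A W b w0 τ S γ (extFun i0 σ) k) := by
          rw [Finset.mul_sum]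
          refine Finset.sum_congr rfl fun k _ => ?_
          rw [Finset.mul_sum]
  have goal1 : (∑ σ : Fin t → Fin q, (∏ k, p (σ k)) *
        ∑ i, p i * sketchF A W (S i) b (wbar σ))
      ≤ ((t:ℝ)+1)⁻¹ * (R / (2 * γ * (1 - γ))) := by
    calc ∑ σ : Fin t → Fin q, (∏ k, p (σ k)) * ∑ i, p i * sketchF A W (S i) b (wbar σ)
        ≤ ∑ σ : Fin t → Fin q, (∏ k, p (σ k)) *
            (((t:ℝ)+1)⁻¹ * ∑ k : Fin (t+1), ∑ i, p i * sketchF A W (S i) b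
              (itSeq A W b w0 τ S γ (extFun i0 σ) k)) :=
          Finset.sum_le_sum fun σ _ => mul_le_mul_of_nonneg_left (key2 σ) (hprodnn σ)
      _ = ((t:ℝ)+1)⁻¹ * ∑ σ : Fin t → Fin q, (∏ k, p (σ k)) *
            (∑ k : Fin (t+1), ∑ i, p i * sketchF A W (S i) b
              (itSeq A W b w0 τ S γ (extFun i0 σ) k)) := by
          rw [Finset.mul_sum]
          exact Finset.sum_congr rfl fun σ _ => by ring
      _ ≤ ((t:ℝ)+1)⁻¹ * (R / c) := by
          exact mul_le_mul_of_nonneg_left key3 htinv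
      _ ≤ ((t:ℝ)+1)⁻¹ * (R / (2 * γ * (1 - γ))) := by
          refine mul_le_mul_of_nonneg_left ?_ htinv
          exact div_le_div_of_nonneg_left hRnn hγγ hγc
  refine ⟨goal1, ?_⟩
  have hpoint2 : ∀ σ : Fin t → Fin q,
      (⨅ j, hEH.eigenvalues j) * ((A *ᵥ wbar σ - b) ⬝ᵥ (A *ᵥ wbar σ - b))
        ≤ 2 * ∑ i, p i * sketchF A W (S i) b (wbar σ) := by
    intro σ
    refine le_trans (rayleigh_min hEH (A *ᵥ wbar σ - b)) ?_
    have hsum : (A *ᵥ wbar σ - b) ⬝ᵥ ((∑ i, p i • sketchH A W (S i)) *ᵥ (A *ᵥ wbar σ - b))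
        = ∑ i, p i * ((A *ᵥ wbar σ - b) ⬝ᵥ (sketchH A W (S i) *ᵥ (A *ᵥ wbar σ - b))) := by
      rw [sum_mulVec', dotProduct_sum']
      refine Finset.sum_congr rfl fun i _ => ?_
      rw [Matrix.smul_mulVec, dotProduct_smul, smul_eq_mul]
    rw [hsum, Finset.mul_sum]
    refine le_of_eq (Finset.sum_congr rfl fun i _ => ?_)
    rw [sketchF]
    ring
  calc (⨅ j, hEH.eigenvalues j) *
        (∑ σ : Fin t → Fin q, (∏ k, p (σ k)) *
          ((A *ᵥ wbar σ - b) ⬝ᵥ (A *ᵥ wbar σ - b)))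
      = ∑ σ : Fin t → Fin q, (∏ k, p (σ k)) *
          ((⨅ j, hEH.eigenvalues j) * ((A *ᵥ wbar σ - b) ⬝ᵥ (A *ᵥ wbar σ - b))) := by
        rw [Finset.mul_sum]
        exact Finset.sum_congr rfl fun σ _ => by ring
    _ ≤ ∑ σ : Fin t → Fin q, (∏ k, p (σ k)) *
          (2 * ∑ i, p i * sketchF A W (S i) b (wbar σ)) :=
        Finset.sum_le_sum fun σ _ => mul_le_mul_of_nonneg_left (hpoint2 σ) (hprodnn σ)
    _ = 2 * ∑ σ : Fin t → Fin q, (∏ k, p (σ k)) *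
          ∑ i, p i * sketchF A W (S i) b (wbar σ) := by
        rw [Finset.mul_sum]
        exact Finset.sum_congr rfl fun σ _ => by ring
    _ ≤ 2 * (((t:ℝ)+1)⁻¹ * (R / (2 * γ * (1 - γ)))) := by linarith [goal1]
    _ = ((t:ℝ)+1)⁻¹ * (R / (γ * (1 - γ))) := by
        have h1 : γ * (1 - γ) ≠ 0 := by nlinarith
        field_simp
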